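/- For every integer m ≥ 3, the number of DWBC3 configurations of the 20V model on T_m whose statistic equals m (i.e. the leading coefficient, the coefficient of τ^{m−1}, of the refined generating polynomial Z_m^{20V3}(τ)) equals the total number Z_{m−2}^{20V3} of DWBC3 configurations on T_{m−2}. -/

import Mathlib

/-!
If the top East vertex `(0, m - 1)` is visited, the ice rule there forces a path to enter it
from the left and leave it downwards. Along the North row and down the East column, the two
boundary half-edges and this path's edge already fix three edges at each vertex, so the ice rule
fixes the other three: one path runs along the whole hook, and no other path touches it. So the
hook is frozen, and what is left is a configuration on the triangle `T_{m-2}` placed inside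
`T_m` (shifted by `(-1, 1)`); the edges joining it to the frozen hook carry exactly the DWBC3
boundary values of `T_{m-2}`. Conversely, every DWBC3 configuration on `T_{m-2}` extends by the
frozen hook, so removing the hook is a bijection onto `Config (m - 2)`.
-/

open Real

namespace TwentyV

/-- The three edge directions of the triangular lattice: `(1,0)`, `(0,1)`, `(1,-1)`. -/
def dir : Fin 3 → ℤ × ℤ := ![(1, 0), (0, 1), (1, -1)]

/-- The triangular domain `T_m`: vertices `(x,y)` with `x ≤ 0`, `y ≤ m-1`, `x+y ≥ 0`. -/
def Tri (m : ℕ) : Set (ℤ × ℤ) := {v | v.1 ≤ 0 ∧ v.2 ≤ (m : ℤ) - 1 ∧ 0 ≤ v.1 + v.2}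

/-- An orientation of the edges of the triangular lattice: the edge joining `v` and
`v + dir d` is recorded at base point `v`, and the value `true` means that it is
oriented from `v` towards `v + dir d`. -/
abbrev Orientation := ℤ × ℤ → Fin 3 → Bool

/-- The edge `(v, d)` is incident to the triangle `T_m`. -/
def Incident (m : ℕ) (v : ℤ × ℤ) (d : Fin 3) : Prop := v ∈ Tri m ∨ v + dir d ∈ Tri m

/-- The number of edges incoming at the vertex `u`. -/
def inDeg (o : Orientation) (u : ℤ × ℤ) : ℕ :=
  (Finset.univ.filter fun d : Fin 3 => o (u - dir d) d = true).card +
    (Finset.univ.filter fun d : Fin 3 => o u d = false).card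

/-- Ice rule: every vertex of `T_m` has exactly three incoming (hence three
outgoing) incident edges. -/
def IceRule (m : ℕ) (o : Orientation) : Prop := ∀ u ∈ Tri m, inDeg o u = 3

/-- DWBC3 boundary conditions on `T_m`: all East boundary half-edges (at vertices
`(0,y)`) point into the domain, all North boundary half-edges (at vertices
`(x,m-1)`) point out of the domain, and the diagonal boundary half-edges (at
vertices `(-y,y)`) point into the domain on the upper half and out of it on the
lower half (for odd `m` the central vertex gets one incoming and one outgoing
half-edge).  In addition, all edges not incident to `T_m` are normalized to
`true`, so that the set of configurations is finite. -/
def DWBC3 (m : ℕ) (o : Orientation) : Prop :=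
  (∀ y : ℤ, 0 ≤ y → y ≤ (m : ℤ) - 1 → o (0, y) 0 = false ∧ o (0, y) 2 = false) ∧
  (∀ x : ℤ, 1 - (m : ℤ) ≤ x → x ≤ 0 →
      o (x, (m : ℤ) - 1) 1 = true ∧ o (x - 1, (m : ℤ)) 2 = false) ∧
  (∀ y : ℤ, 0 ≤ y → y ≤ (m : ℤ) - 1 →
      (o (-y - 1, y) 0 = true ↔ (m : ℤ) - 1 ≤ 2 * y) ∧
      (o (-y, y - 1) 1 = true ↔ (m : ℤ) ≤ 2 * y)) ∧
  (∀ v d, ¬ Incident m v d → o v d = true)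

/-- The set of 20V configurations with DWBC3 on `T_m`. -/
def Config (m : ℕ) : Set Orientation := {o | IceRule m o ∧ DWBC3 m o}

/-- `Z_m^{20V3}`: the number of 20V configurations with DWBC3 on `T_m`. -/
noncomputable def Z (m : ℕ) : ℕ := (Config m).ncard

end TwentyV
namespace TwentyV

/-- The edge `(v, d)` is occupied by an osculating Schröder path step: under the
standard bijection, horizontal edges are traversed rightwards (step `(1,0)`),
vertical edges downwards (step `(0,-1)`), diagonal edges down-rightwards
(step `(1,-1)`). -/
def Occupied (o : Orientation) (v : ℤ × ℤ) (d : Fin 3) : Prop :=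
  if d = 1 then o v d = false else o v d = true

/-- The vertex `u` is visited by a path, i.e. some incident edge is occupied. -/
def Visited (o : Orientation) (u : ℤ × ℤ) : Prop :=
  ∃ d : Fin 3, Occupied o (u - dir d) d ∨ Occupied o u d

/-- The statistic of the configuration `o` equals `k`: the topmost vertex on the
East boundary line `x = 0` visited by a path is `(0, k-1)`, i.e. has position `k`
counted from the bottom. -/
def HasStat (m : ℕ) (o : Orientation) (k : ℕ) : Prop :=
  Visited o (0, (k : ℤ) - 1) ∧
    ∀ j : ℤ, (k : ℤ) - 1 < j → j ≤ (m : ℤ) - 1 → ¬ Visited o (0, j)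

/-- The refined number `Z_{m,k}^{20V3}` of DWBC3 configurations with statistic `k`. -/
noncomputable def Zref (m k : ℕ) : ℕ := {o ∈ Config m | HasStat m o k}.ncard

/-- The refined generating polynomial `Z_m^{20V3}(τ) = ∑_{k=1}^m Z_{m,k}^{20V3} τ^{k-1}`. -/
noncomputable def Zpoly (m : ℕ) (τ : ℝ) : ℝ :=
  ∑ k ∈ Finset.Icc 1 m, (Zref m k : ℝ) * τ ^ (k - 1)

end TwentyV

namespace TwentyV

lemma inDeg_mk (o : Orientation) (x y : ℤ) :
    inDeg o (x, y) =
      (if o (x - 1, y) 0 then 1 else 0) + (if o (x, y - 1) 1 then 1 else 0) +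
        (if o (x - 1, y + 1) 2 then 1 else 0) +
        ((if o (x, y) 0 = false then 1 else 0) + (if o (x, y) 1 = false then 1 else 0) +
          (if o (x, y) 2 = false then 1 else 0)) := by
  rw [inDeg, Finset.card_filter, Finset.card_filter, Fin.sum_univ_three, Fin.sum_univ_three]
  simp [dir]

lemma visited_mk_iff (o : Orientation) (x y : ℤ) :
    Visited o (x, y) ↔
      o (x - 1, y) 0 = true ∨ o (x, y) 0 = true ∨ o (x, y - 1) 1 = false ∨ o (x, y) 1 = false ∨
        o (x - 1, y + 1) 2 = true ∨ o (x, y) 2 = true := by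
  simp [Visited, Fin.exists_fin_succ, Occupied, dir, or_assoc]

lemma inDeg_congr {o o' : Orientation} {u : ℤ × ℤ}
    (h : ∀ d, o (u - dir d) d = o' (u - dir d) d ∧ o u d = o' u d) :
    inDeg o u = inDeg o' u := by
  simp only [inDeg, fun d => (h d).1, fun d => (h d).2]

lemma inDeg_comp_add (o : Orientation) (a u : ℤ × ℤ) :
    inDeg (fun v => o (v + a)) u = inDeg o (u + a) := by
  simp only [inDeg, sub_add_eq_add_sub]

variable {m : ℕ} {o : Orientation}

lemma hasStat_self_iff : HasStat m o m ↔ Visited o (0, m - 1) :=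
  ⟨And.left, fun h => ⟨h, fun _ h₁ h₂ => absurd h₂ (not_le.mpr h₁)⟩⟩

section Forcing

variable (ho : o ∈ Config m)
include ho

lemma column_step {y : ℤ} (hy₀ : 0 ≤ y) (hy₁ : y ≤ m - 1) (hv : o (0, y) 1 = false) :
    o (-1, y) 0 = false ∧ o (0, y - 1) 1 = false ∧ o (-1, y + 1) 2 = false := by
  have ice := ho.1 (0, y) ⟨le_rfl, hy₁, by simpa using hy₀⟩
  rw [inDeg_mk, (ho.2.1 y hy₀ hy₁).1, (ho.2.1 y hy₀ hy₁).2, hv] at ice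
  simpa [and_assoc] using ice

lemma row_step {x : ℤ} (hx₀ : 1 - m ≤ x) (hx₁ : x ≤ 0) (hv : o (x, m - 1) 0 = true) :
    o (x - 1, m - 1) 0 = true ∧ o (x, m - 2) 1 = true ∧ o (x, m - 1) 2 = false := by
  have ice := ho.1 (x, m - 1) ⟨hx₁, le_rfl, by omega⟩
  rw [inDeg_mk, (ho.2.2.1 x hx₀ hx₁).1, sub_add_cancel, (ho.2.2.1 x hx₀ hx₁).2, hv] at ice
  simp only [sub_sub, one_add_one_eq_two, Bool.false_eq_true, ↓reduceIte, add_zero,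
    Bool.true_eq_false, zero_add] at ice
  split_ifs at ice with h₀ h₁ h₂ <;> first | exact ⟨h₀, h₁, h₂⟩ | omega

lemma corner_of_visited (hm : 0 < m) (hv : Visited o (0, m - 1)) :
    o (-1, m - 1) 0 = true ∧ o (0, m - 2) 1 = false := by
  have ice := ho.1 (0, m - 1) ⟨le_rfl, le_rfl, by omega⟩
  obtain ⟨hE₀, hE₂⟩ := ho.2.1 (m - 1) (by omega) le_rfl
  obtain ⟨hN₁, hN₂⟩ := ho.2.2.1 0 (by omega) le_rfl
  rw [visited_mk_iff] at hv
  rw [inDeg_mk] at ice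
  simp only [zero_sub, sub_add_cancel, sub_sub, one_add_one_eq_two] at hv ice hN₂
  simp only [hE₀, hE₂, hN₁, hN₂, Bool.false_eq_true, Bool.true_eq_false, or_false, false_or,
    ↓reduceIte, add_zero, Nat.reduceAdd, Nat.reduceEqDiff] at hv ice
  cases h₀ : o (-1, m - 1) 0 <;> cases h₁ : o (0, m - 2) 1 <;> simp_all

lemma column_of_visited (hm : 0 < m) (hv : Visited o (0, m - 1)) {y : ℤ} (hy₀ : -1 ≤ y)
    (hy₁ : y ≤ m - 2) : o (0, y) 1 = false := by
  induction y, hy₁ using Int.leInductionDown with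
  | base => exact (corner_of_visited ho hm hv).2
  | pred y hy ih => exact (column_step ho (by omega) (by omega) (ih (by omega))).2.1

lemma row_of_visited (hm : 0 < m) (hv : Visited o (0, m - 1)) {x : ℤ} (hx₀ : -m ≤ x)
    (hx₁ : x ≤ -1) : o (x, m - 1) 0 = true := by
  induction x, hx₁ using Int.leInductionDown with
  | base => exact (corner_of_visited ho hm hv).1
  | pred x hx ih => exact (row_step ho (by omega) (by omega) (ih (by omega))).1

end Forcing

/-- On the edges of `T_m` not incident to the inner triangle, `hook m` is the configuration in
which one path enters at `(1 - m, m - 1)`, runs right along the North row and down the East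
column, leaves at `(0, 0)`, and no other edge is occupied; all its other values are `true`. -/
def hook (m : ℕ) : Orientation := fun v =>
  ![!decide ((v.1 = 0 ∧ 0 ≤ v.2 ∧ v.2 ≤ m - 1) ∨ (v.1 = -1 ∧ v.2 = 0)),
    !decide (v.1 = 0 ∧ -1 ≤ v.2 ∧ v.2 ≤ m - 2),
    !decide ((v.1 = 0 ∧ 0 ≤ v.2 ∧ v.2 ≤ m - 1) ∨ (v.1 = -1 ∧ v.2 = m - 1) ∨
      (v.2 = m ∧ -m ≤ v.1 ∧ v.1 ≤ -1))]

lemma hook_eq_true_of_not_incident (hm : 2 ≤ m) {v : ℤ × ℤ} {d : Fin 3}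
    (h : ¬ Incident m v d) : hook m v d = true := by
  obtain ⟨x, y⟩ := v
  fin_cases d <;> simp [Incident, Tri, dir, hook] at h ⊢ <;> omega

/- `T_{m-2}` translated by `-dir 2 = (-1, 1)` is `T_m` without its North row and East column. -/

open Classical in
noncomputable def removeHook (m : ℕ) (o : Orientation) : Orientation := fun v d =>
  if Incident (m - 2) v d then o (v - dir 2) d else true

open Classical in
noncomputable def addHook (m : ℕ) (o : Orientation) : Orientation := fun v d =>
  if Incident (m - 2) (v + dir 2) d then o (v + dir 2) d else hook m v d

section Apply

variable {v : ℤ × ℤ} {d : Fin 3}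

lemma removeHook_of_incident (h : Incident (m - 2) v d) :
    removeHook m o v d = o (v - dir 2) d :=
  if_pos h

lemma removeHook_of_not_incident (h : ¬ Incident (m - 2) v d) : removeHook m o v d = true :=
  if_neg h

lemma addHook_of_incident (h : Incident (m - 2) (v + dir 2) d) :
    addHook m o v d = o (v + dir 2) d :=
  if_pos h

lemma addHook_of_not_incident (h : ¬ Incident (m - 2) (v + dir 2) d) :
    addHook m o v d = hook m v d :=
  if_neg h

lemma mem_tri_of_add_dir_two_mem {u : ℤ × ℤ} (hu : u + dir 2 ∈ Tri (m - 2)) : u ∈ Tri m := by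
  simp [Tri, dir] at *
  omega

lemma incident_of_incident_add_dir_two (h : Incident (m - 2) (v + dir 2) d) : Incident m v d :=
  h.imp mem_tri_of_add_dir_two_mem fun h => mem_tri_of_add_dir_two_mem (by rwa [add_right_comm])

end Apply

lemma inDeg_removeHook (o : Orientation) {u : ℤ × ℤ} (hu : u ∈ Tri (m - 2)) :
    inDeg (removeHook m o) u = inDeg o (u - dir 2) := by
  rw [sub_eq_add_neg, ← inDeg_comp_add]
  refine inDeg_congr fun d => ⟨?_, ?_⟩
  · rw [removeHook_of_incident (Or.inr (by simpa using hu)), sub_eq_add_neg]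
  · rw [removeHook_of_incident (Or.inl hu), sub_eq_add_neg]

lemma inDeg_addHook (o : Orientation) {u : ℤ × ℤ} (hu : u + dir 2 ∈ Tri (m - 2)) :
    inDeg (addHook m o) u = inDeg o (u + dir 2) := by
  rw [← inDeg_comp_add]
  refine inDeg_congr fun d => ⟨?_, ?_⟩
  · rw [addHook_of_incident (Or.inr (by simpa [sub_add_eq_add_sub] using hu))]
  · rw [addHook_of_incident (Or.inl hu)]

lemma iceRule_removeHook (ho : o ∈ Config m) : IceRule (m - 2) (removeHook m o) := by
  intro u hu
  rw [inDeg_removeHook o hu]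
  exact ho.1 _ (mem_tri_of_add_dir_two_mem (by rwa [sub_add_cancel]))

section RemoveHook

variable (hm : 2 ≤ m) (ho : o ∈ Config m) (hv : Visited o (0, m - 1))
include hm ho hv

lemma dwbc3_removeHook : DWBC3 (m - 2) (removeHook m o) := by
  have column (y : ℤ) (hy₀ : 0 ≤ y) (hy₁ : y ≤ m - 2) :=
    column_step ho hy₀ (by omega) (column_of_visited ho (by omega) hv (by omega) hy₁)
  have row (x : ℤ) (hx₀ : 1 - m ≤ x) (hx₁ : x ≤ -1) :=
    row_step ho hx₀ (by omega) (row_of_visited ho (by omega) hv (by omega) hx₁)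
  have hcast : ((m - 2 : ℕ) : ℤ) = m - 2 := by omega
  refine ⟨fun y hy₀ hy₁ => ?_, fun x hx₀ hx₁ => ?_, fun y hy₀ hy₁ => ?_,
    fun v d h => removeHook_of_not_incident h⟩
  · rw [removeHook_of_incident (by simp [Incident, Tri]; omega),
      removeHook_of_incident (by simp [Incident, Tri]; omega)]
    simp only [dir, Fin.isValue, Matrix.cons_val, Prod.mk_sub_mk, zero_sub, sub_neg_eq_add]
    exact ⟨(column (y + 1) (by omega) (by omega)).1, (column y hy₀ (by omega)).2.2⟩
  · rw [removeHook_of_incident (by simp [Incident, Tri]; omega),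
      removeHook_of_incident (by simp [Incident, Tri, dir]; omega)]
    simp only [hcast, dir, Fin.isValue, Matrix.cons_val, Prod.mk_sub_mk, sub_neg_eq_add,
      sub_add_cancel]
    rw [show (m : ℤ) - 2 + 1 = m - 1 by ring]
    exact ⟨(row (x - 1) (by omega) (by omega)).2.1,
      (row (x - 1 - 1) (by omega) (by omega)).2.2⟩
  · rw [removeHook_of_incident (by simp [Incident, Tri, dir]; omega),
      removeHook_of_incident (by simp [Incident, Tri, dir]; omega)]
    obtain ⟨h₀, h₁⟩ := ho.2.2.2.1 (y + 1) (by omega) (by omega)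
    rw [show (-(y + 1) - 1, y + 1) = (-y - 1, y) - dir 2 by simp [dir]; omega] at h₀
    rw [show (-(y + 1), y + 1 - 1) = (-y, y - 1) - dir 2 by simp [dir]; omega] at h₁
    rw [h₀, h₁]
    omega

lemma eq_hook_zero_of_visited {x y : ℤ} (hi : Incident m (x, y) 0)
    (h : ¬ Incident (m - 2) ((x, y) + dir 2) 0) : o (x, y) 0 = hook m (x, y) 0 := by
  have ⟨_, hE, _, hD, _⟩ := ho
  simp [Incident, Tri, dir] at h hi
  obtain ⟨rfl, hy₀, hy₁⟩ | ⟨rfl, rfl⟩ | ⟨rfl, hx₀, hx₁⟩ :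
      (x = 0 ∧ 0 ≤ y ∧ y ≤ m - 1) ∨ (x = -1 ∧ y = 0) ∨ (y = m - 1 ∧ -m ≤ x ∧ x ≤ -1) := by
    omega
  · rw [(hE y hy₀ hy₁).1]
    simp [hook]
    omega
  · have := (hD 0 le_rfl (by omega)).1
    simp only [neg_zero, zero_sub, mul_zero] at this
    rw [show o (-1, 0) 0 = false by simpa using this.not.mpr (by omega)]
    simp [hook]
  · rw [row_of_visited ho (by omega) hv hx₀ hx₁]
    simp [hook]
    omega

lemma eq_hook_one_of_visited {x y : ℤ} (hi : Incident m (x, y) 1)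
    (h : ¬ Incident (m - 2) ((x, y) + dir 2) 1) : o (x, y) 1 = hook m (x, y) 1 := by
  have ⟨_, _, hN, hD, _⟩ := ho
  simp [Incident, Tri, dir] at h hi
  obtain ⟨rfl, hy₀, hy₁⟩ | ⟨rfl, hx₀, hx₁⟩ | ⟨rfl, rfl⟩ :
      (x = 0 ∧ -1 ≤ y ∧ y ≤ m - 2) ∨ (y = m - 1 ∧ 1 - m ≤ x ∧ x ≤ 0) ∨
        (x = 1 - m ∧ y = m - 2) := by
    omega
  · rw [column_of_visited ho (by omega) hv hy₀ hy₁]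
    simp [hook]
    omega
  · rw [(hN x hx₀ hx₁).1]
    simp [hook]
    omega
  · have := (hD (m - 1) (by omega) le_rfl).2
    rw [neg_sub, sub_sub, one_add_one_eq_two] at this
    rw [this.mpr (by omega)]
    simp [hook]
    omega

lemma eq_hook_two_of_visited {x y : ℤ} (hi : Incident m (x, y) 2)
    (h : ¬ Incident (m - 2) ((x, y) + dir 2) 2) : o (x, y) 2 = hook m (x, y) 2 := by
  have ⟨_, hE, hN, _, _⟩ := ho
  simp [Incident, Tri, dir] at h hi
  obtain ⟨rfl, hy₀, hy₁⟩ | ⟨rfl, rfl⟩ | ⟨rfl, hx₀, hx₁⟩ :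
      (x = 0 ∧ 0 ≤ y ∧ y ≤ m - 1) ∨ (x = -1 ∧ y = m - 1) ∨ (y = m ∧ -m ≤ x ∧ x ≤ -1) := by
    omega
  · rw [(hE y hy₀ hy₁).2]
    simp [hook]
    omega
  · rw [(row_step ho (x := -1) (by omega) (by omega)
      (row_of_visited ho (by omega) hv (by omega) le_rfl)).2.2]
    simp [hook]
  · have := (hN (x + 1) (by omega) (by omega)).2
    rw [add_sub_cancel_right] at this
    rw [this]
    simp [hook]
    omega

lemma eq_hook_of_visited {v : ℤ × ℤ} {d : Fin 3} (h : ¬ Incident (m - 2) (v + dir 2) d) :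
    o v d = hook m v d := by
  by_cases hi : Incident m v d
  · obtain ⟨x, y⟩ := v
    obtain rfl | rfl | rfl : d = 0 ∨ d = 1 ∨ d = 2 := by omega
    · exact eq_hook_zero_of_visited hm ho hv hi h
    · exact eq_hook_one_of_visited hm ho hv hi h
    · exact eq_hook_two_of_visited hm ho hv hi h
  · rw [ho.2.2.2.2 v d hi, hook_eq_true_of_not_incident hm hi]

lemma addHook_removeHook : addHook m (removeHook m o) = o := by
  funext v d
  by_cases h : Incident (m - 2) (v + dir 2) d
  · rw [addHook_of_incident h, removeHook_of_incident h, add_sub_cancel_right]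
  · rw [addHook_of_not_incident h, eq_hook_of_visited hm ho hv h]

end RemoveHook

lemma inDeg_addHook_corner (hm : 2 ≤ m) : inDeg (addHook m o) (0, m - 1) = 3 := by
  rw [inDeg_mk]
  simp (disch := (simp [Incident, Tri, dir]; try omega)) only [addHook_of_not_incident]
  simp [hook]
  split_ifs <;> omega

lemma visited_addHook (hm : 2 ≤ m) : Visited (addHook m o) (0, m - 1) := by
  rw [visited_mk_iff, zero_sub]
  refine Or.inl ?_
  rw [addHook_of_not_incident (by simp [Incident, Tri, dir]; omega)]
  simp [hook]
  omega

section AddHook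

variable (hm : 2 ≤ m) (ho : o ∈ Config (m - 2))
include hm ho

lemma addHook_column_link_zero {y : ℤ} (hy₀ : 0 ≤ y) (hy₁ : y ≤ m - 2) :
    addHook m o (-1, y) 0 = false := by
  rcases hy₀.eq_or_lt with rfl | hy
  · rw [addHook_of_not_incident (by simp [Incident, Tri, dir])]
    simp [hook]
  · rw [addHook_of_incident (by simp [Incident, Tri, dir]; omega)]
    simpa [dir, ← sub_eq_add_neg] using (ho.2.1 (y - 1) (by omega) (by omega)).1

lemma addHook_column_link_two {y : ℤ} (hy₀ : 1 ≤ y) (hy₁ : y ≤ m - 1) :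
    addHook m o (-1, y) 2 = false := by
  rcases (show y = m - 1 ∨ y ≤ m - 2 by omega) with rfl | hy
  · rw [addHook_of_not_incident (by simp [Incident, Tri, dir]; omega)]
    simp [hook]
  · rw [addHook_of_incident (by simp [Incident, Tri, dir]; omega)]
    simpa [dir, ← sub_eq_add_neg] using (ho.2.1 (y - 1) (by omega) (by omega)).2

lemma addHook_row_link_one {x : ℤ} (hx₀ : 1 - m ≤ x) (hx₁ : x ≤ -1) :
    addHook m o (x, m - 2) 1 = true := by
  rcases (show x = 1 - m ∨ 2 - m ≤ x by omega) with rfl | hx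
  · rw [addHook_of_not_incident (by simp [Incident, Tri, dir]; omega)]
    simp [hook]
    omega
  · rw [addHook_of_incident (by simp [Incident, Tri, dir]; omega)]
    have := (ho.2.2.1 (x + 1) (by omega) (by omega)).1
    rw [show ((m - 2 : ℕ) : ℤ) - 1 = m - 2 + -1 by omega] at this
    simpa [dir] using this

lemma addHook_row_link_two {x : ℤ} (hx₀ : 1 - m ≤ x) (hx₁ : x ≤ -1) :
    addHook m o (x, m - 1) 2 = false := by
  rcases (show x = -1 ∨ x ≤ -2 by omega) with rfl | hx
  · rw [addHook_of_not_incident (by simp [Incident, Tri, dir]; omega)]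
    simp [hook]
  · rw [addHook_of_incident (by simp [Incident, Tri, dir]; omega)]
    have := (ho.2.2.1 (x + 2) (by omega) (by omega)).2
    rw [show ((m - 2 : ℕ) : ℤ) = m - 1 + -1 by omega, show x + 2 - 1 = x + 1 by ring] at this
    simpa [dir] using this

lemma inDeg_addHook_column {y : ℤ} (hy₀ : 0 ≤ y) (hy₁ : y ≤ m - 2) :
    inDeg (addHook m o) (0, y) = 3 := by
  rw [inDeg_mk]
  simp (disch := (simp [Incident, Tri, dir]; try omega)) only [addHook_of_not_incident]
  rw [zero_sub, addHook_column_link_zero hm ho hy₀ hy₁,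
    addHook_column_link_two hm ho (by omega) (by omega)]
  simp [hook]
  split_ifs <;> omega

lemma inDeg_addHook_row {x : ℤ} (hx₀ : 1 - m ≤ x) (hx₁ : x ≤ -1) :
    inDeg (addHook m o) (x, m - 1) = 3 := by
  rw [inDeg_mk]
  simp (disch := (simp [Incident, Tri, dir]; try omega)) only [addHook_of_not_incident]
  rw [sub_sub, one_add_one_eq_two, addHook_row_link_one hm ho hx₀ hx₁,
    addHook_row_link_two hm ho hx₀ hx₁]
  simp [hook]
  split_ifs <;> omega

lemma iceRule_addHook : IceRule m (addHook m o) := by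
  intro u hu
  by_cases hin : u + dir 2 ∈ Tri (m - 2)
  · rw [inDeg_addHook o hin]
    exact ho.1 _ hin
  obtain ⟨x, y⟩ := u
  simp [Tri, dir] at hu hin
  obtain ⟨rfl, hy⟩ | ⟨rfl, rfl⟩ | ⟨hx, rfl⟩ :
      (x = 0 ∧ y ≤ m - 2) ∨ (x = 0 ∧ y = m - 1) ∨ (x ≤ -1 ∧ y = m - 1) := by
    omega
  · exact inDeg_addHook_column hm ho (by omega) hy
  · exact inDeg_addHook_corner hm
  · exact inDeg_addHook_row hm ho (by omega) hx

lemma dwbc3_addHook : DWBC3 m (addHook m o) := by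
  refine ⟨fun y hy₀ hy₁ => ?_, fun x hx₀ hx₁ => ?_, fun y hy₀ hy₁ => ?_, fun v d h => ?_⟩
  · simp (disch := (simp [Incident, Tri, dir]; try omega)) only [addHook_of_not_incident]
    simp [hook]
    omega
  · simp (disch := (simp [Incident, Tri, dir]; try omega)) only [addHook_of_not_incident]
    simp [hook]
    omega
  · by_cases hy : 1 ≤ y ∧ y ≤ m - 2
    · rw [addHook_of_incident (by simp [Incident, Tri, dir]; omega),
        addHook_of_incident (by simp [Incident, Tri, dir]; omega)]
      obtain ⟨h₀, h₁⟩ := ho.2.2.2.1 (y - 1) (by omega) (by omega)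
      rw [show (-(y - 1) - 1, y - 1) = (-y - 1, y) + dir 2 by simp [dir]; omega] at h₀
      rw [show (-(y - 1), y - 1 - 1) = (-y, y - 1) + dir 2 by simp [dir]; omega] at h₁
      rw [h₀, h₁]
      omega
    · simp (disch := (simp [Incident, Tri, dir]; try omega)) only [addHook_of_not_incident]
      simp [hook]
      omega
  · rw [addHook_of_not_incident (mt incident_of_incident_add_dir_two h),
      hook_eq_true_of_not_incident hm h]

end AddHook

lemma removeHook_addHook (ho : o ∈ Config (m - 2)) : removeHook m (addHook m o) = o := by
  funext v d
  by_cases h : Incident (m - 2) v d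
  · rw [removeHook_of_incident h, addHook_of_incident (by rwa [sub_add_cancel]), sub_add_cancel]
  · rw [removeHook_of_not_incident h, ho.2.2.2.2 v d h]

theorem bijOn_addHook (hm : 2 ≤ m) :
    Set.BijOn (addHook m) (Config (m - 2)) {o ∈ Config m | HasStat m o m} := by
  refine Set.InvOn.bijOn ⟨fun o ho => removeHook_addHook ho, fun o ho => ?_⟩
    (fun o ho => ⟨⟨iceRule_addHook hm ho, dwbc3_addHook hm ho⟩,
      hasStat_self_iff.mpr (visited_addHook hm)⟩) (fun o ho => ?_)
  · exact addHook_removeHook hm ho.1 (hasStat_self_iff.mp ho.2)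
  · exact ⟨iceRule_removeHook ho.1,
      dwbc3_removeHook hm ho.1 (hasStat_self_iff.mp ho.2)⟩

end TwentyV

/-- For every integer `m ≥ 3`, the number of DWBC3 configurations of
the 20V model on `T_m` whose statistic equals `m` (the leading coefficient of
`Z_m^{20V3}(τ)`) equals the total number of DWBC3 configurations on `T_{m-2}`. -/
theorem Zref_top_eq_Z_sub_two (m : ℕ) (hm : 3 ≤ m) :
    TwentyV.Zref m m = TwentyV.Z (m - 2) :=
  (TwentyV.bijOn_addHook (by omega)).ncard_eq.symm
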